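/- arXiv:2111.09580 — 6 statements merged into one kernel-verified Lean document; each statement's English description precedes it below -/
import Mathlib

section
/- Let G be a group acting sharply 2-transitively on a set X (|X| ≥ 2), in which all involutions are conjugate and every involution fixes a point of X. If G is generated by its set of translations T_G = I_G² \ {1} (nontrivial products of two involutions), then G is simple. Conversely, if G is simple then G is generated by T_G. -/
/-- An involution is an element of order exactly 2. -/
def IsInvolution {G : Type*} [Group G] (g : G) : Prop := g ^ 2 = 1 ∧ g ≠ 1

/-- An action of `G` on `X` is sharply 2-transitive if any pair of distinct points can be
mapped to any pair of distinct points by a unique group element. -/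
def Sharply2Transitive (G X : Type*) [Group G] [MulAction G X] : Prop :=
  ∀ x₁ x₂ y₁ y₂ : X, x₁ ≠ x₂ → y₁ ≠ y₂ → ∃! g : G, g • x₁ = y₁ ∧ g • x₂ = y₂

/-- The set of translations of `G`: nontrivial products of two involutions. -/
def TranslationSet (G : Type*) [Group G] : Set G :=
  {g : G | g ≠ 1 ∧ ∃ i j : G, IsInvolution i ∧ IsInvolution j ∧ g = i * j}

/-- Let `G` act sharply 2-transitively on `X` (`|X| ≥ 2`), with all involutions conjugate,
every involution fixing a point, and (characteristic `≠ 2`) every nontrivial element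
centralizing at most one involution. Then `G` is simple if and only if it is generated by
its set of translations. -/
theorem simple_iff_generated_by_translations {G X : Type*} [Group G] [MulAction G X]
    (hX : ∃ x y : X, x ≠ y) (h2 : Sharply2Transitive G X)
    (hconj : ∀ i j : G, IsInvolution i → IsInvolution j → IsConj i j)
    (hfix : ∀ i : G, IsInvolution i → ∃ x : X, i • x = x)
    (hchar : ∀ g : G, g ≠ 1 → ∀ i j : G, IsInvolution i → IsInvolution j →
      g * i = i * g → g * j = j * g → i = j) :
    Subgroup.closure (TranslationSet G) = ⊤ ↔ IsSimpleGroup G := by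
  classical
  obtain ⟨a, b, hab⟩ := hX
  -- two-point extensionality
  have ext2 : ∀ {x y : X}, x ≠ y → ∀ {g h : G}, g • x = h • x → g • y = h • y → g = h := by
    intro x y hxy g h hgx hgy
    obtain ⟨u, -, hu⟩ := h2 x y (h • x) (h • y) hxy
      (fun e => hxy (smul_left_cancel_iff h |>.mp e))
    exact (hu g ⟨hgx, hgy⟩).trans (hu h ⟨rfl, rfl⟩).symm
  have fix1 : ∀ {x y : X} {g : G}, x ≠ y → g • x = x → g • y = y → g = 1 := by
    intro x y g hxy hx hy
    exact ext2 hxy (by rw [one_smul]; exact hx) (by rw [one_smul]; exact hy)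
  have invmul : ∀ {i : G}, IsInvolution i → i * i = 1 := by
    intro i hi; have := hi.1; rwa [pow_two] at this
  have inv_eq : ∀ {i : G}, IsInvolution i → i⁻¹ = i := by
    intro i hi
    exact inv_eq_of_mul_eq_one_left (invmul hi)
  have invsmul : ∀ {i : G}, IsInvolution i → ∀ p : X, i • i • p = p := by
    intro i hi p; rw [← mul_smul, invmul hi, one_smul]
  have conjNe : ∀ (g x : G), x ≠ 1 → g * x * g⁻¹ ≠ 1 := by
    intro g x hx e
    apply hx
    have := congrArg (fun z => g⁻¹ * z * g) e
    simpa [mul_assoc] using this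
  have conjInv : ∀ (g : G) {i : G}, IsInvolution i → IsInvolution (g * i * g⁻¹) := by
    intro g i hi
    refine ⟨?_, conjNe g i hi.2⟩
    have h1 : (g * i * g⁻¹) * (g * i * g⁻¹) = g * (i * i) * g⁻¹ := by group
    rw [pow_two, h1, invmul hi, mul_one, mul_inv_cancel]
  -- swappers
  have swap : ∀ {x y : X}, x ≠ y → ∃ k : G, IsInvolution k ∧ k • x = y ∧ k • y = x := by
    intro x y hxy
    obtain ⟨k, ⟨hk1, hk2⟩, -⟩ := h2 x y y x hxy hxy.symm
    have hkk : k * k = 1 := fix1 hxy (by rw [mul_smul, hk1, hk2]) (by rw [mul_smul, hk2, hk1])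
    refine ⟨k, ⟨by rw [pow_two]; exact hkk, ?_⟩, hk1, hk2⟩
    intro e; rw [e, one_smul] at hk1; exact hxy hk1
  have centerUnique : ∀ {i : G}, IsInvolution i → ∀ {c d : X}, i • c = c → i • d = d → c = d := by
    intro i hi c d hc hd
    by_contra hcd
    exact hi.2 (fix1 hcd hc hd)
  -- KEY: an involution is determined by its fixed point
  have key : ∀ {i j : G}, IsInvolution i → IsInvolution j → ∀ {c : X},
      i • c = c → j • c = c → i = j := by
    intro i j hi hj c hic hjc
    obtain ⟨x, hxc⟩ : ∃ x : X, x ≠ c := by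
      rcases eq_or_ne a c with h | h
      · exact ⟨b, by rw [← h]; exact hab.symm⟩
      · exact ⟨a, h⟩
    have hyx : i • x ≠ x := fun e => hxc (centerUnique hi e hic)
    have hy'x : j • x ≠ x := fun e => hxc (centerUnique hj e hjc)
    rcases eq_or_ne (i • x) (j • x) with hyy | hyy
    · exact ext2 hxc (show i • x = j • x from hyy) (hic.trans hjc.symm)
    · obtain ⟨g, ⟨hgx, hgy⟩, -⟩ := h2 x (i • x) x (j • x) hyx.symm hy'x.symm
      have hginvx : g⁻¹ • x = x := inv_smul_eq_iff.mpr hgx.symm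
      have h1 : (g * i * g⁻¹) • x = j • x := by
        rw [mul_smul, mul_smul, hginvx, hgy]
      have hginvy : g⁻¹ • (j • x) = i • x := inv_smul_eq_iff.mpr hgy.symm
      have h2' : (g * i * g⁻¹) • (j • x) = x := by
        rw [mul_smul, mul_smul, hginvy, invsmul hi, hgx]
      have hj2 : j • (j • x) = x := invsmul hj x
      have hEq : g * i * g⁻¹ = j := ext2 hy'x.symm h1 (h2'.trans hj2.symm)
      have hfixgc : j • (g • c) = g • c := by
        rw [← hEq, mul_smul, mul_smul, inv_smul_smul, hic]
      have hgc : g • c = c := centerUnique hj hfixgc hjc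
      have hg1 : g = 1 := fix1 hxc hgx hgc
      rw [hg1, one_smul] at hgy
      exact absurd hgy hyy
  -- two distinct involutions, hence a translation
  obtain ⟨k, hk, hka, hkb⟩ := swap hab
  obtain ⟨c, hc⟩ := hfix k hk
  have hca : c ≠ a := by
    intro e; rw [e] at hc; rw [hka] at hc; exact hab hc.symm
  have hcb : c ≠ b := by
    intro e; rw [e] at hc; rw [hkb] at hc; exact hab hc
  obtain ⟨k', hk', hk'a, hk'c⟩ := swap (show a ≠ c from hca.symm)
  have hkk' : k ≠ k' := by
    intro e
    rw [← e] at hk'a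
    rw [hka] at hk'a
    exact hcb hk'a.symm
  have htmem : k * k' ∈ TranslationSet G := by
    refine ⟨?_, k, k', hk, hk', rfl⟩
    intro e
    have h3 : k⁻¹ = k' := inv_eq_of_mul_eq_one_right e
    rw [inv_eq hk] at h3
    exact hkk' h3
  constructor
  · -- generated by translations → simple
    intro hgen
    refine { toNontrivial := ⟨⟨k, 1, hk.2⟩⟩, eq_bot_or_eq_top_of_normal := ?_ }
    intro N hN
    rcases eq_or_ne N ⊥ with hbot | hbot
    · exact Or.inl hbot
    right
    obtain ⟨n₀, hn₀N, hn₀⟩ : ∃ n ∈ N, n ≠ 1 := by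
      by_contra hcon
      push_neg at hcon
      apply hbot
      ext z
      simp only [Subgroup.mem_bot]
      exact ⟨fun hz => hcon z hz, fun hz => hz ▸ N.one_mem⟩
    obtain ⟨p, hp⟩ : ∃ p : X, n₀ • p ≠ p := by
      by_contra hcon
      push_neg at hcon
      exact hn₀ (fix1 hab (hcon a) (hcon b))
    have Ntrans : ∀ u v : X, ∃ g ∈ N, g • u = v := by
      intro u v
      rcases eq_or_ne u v with rfl | huv
      · exact ⟨1, N.one_mem, one_smul _ _⟩
      · obtain ⟨h, ⟨hh1, hh2⟩, -⟩ := h2 p (n₀ • p) u v (Ne.symm hp) huv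
        refine ⟨h * n₀ * h⁻¹, hN.conj_mem _ hn₀N h, ?_⟩
        have hhu : h⁻¹ • u = p := inv_smul_eq_iff.mpr hh1.symm
        rw [mul_smul, mul_smul, hhu, hh2]
    have hT : TranslationSet G ⊆ (N : Set G) := by
      rintro t ⟨ht1, i, j, hi, hj, rfl⟩
      have hij : i ≠ j := by
        intro e; rw [e] at ht1; exact ht1 (invmul hj)
      obtain ⟨ci, hci⟩ := hfix i hi
      obtain ⟨cj, hcj⟩ := hfix j hj
      have hcij : ci ≠ cj := by
        intro e; rw [e] at hci; exact hij (key hi hj hci hcj)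
      obtain ⟨g, hgN, hg⟩ := Ntrans ci cj
      have hconjfix : (g * i * g⁻¹) • cj = cj := by
        rw [← hg, mul_smul, mul_smul, inv_smul_smul, hci]
      have hgj : g * i * g⁻¹ = j := key (conjInv g hi) hj hconjfix hcj
      have hrw : i * j = (i * g * i⁻¹) * g⁻¹ := by
        rw [← hgj, inv_eq hi]; group
      rw [hrw]
      exact N.mul_mem (hN.conj_mem g hgN i) (N.inv_mem hgN)
    have hle : Subgroup.closure (TranslationSet G) ≤ N := (Subgroup.closure_le N).mpr hT
    rw [hgen] at hle
    exact top_le_iff.mp hle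
  · -- simple → generated by translations
    intro hsimple
    have hnormal : (Subgroup.closure (TranslationSet G)).Normal := by
      constructor
      intro n hn g
      induction hn using Subgroup.closure_induction with
      | mem x hx =>
        obtain ⟨hx1, i, j, hi, hj, rfl⟩ := hx
        apply Subgroup.subset_closure
        refine ⟨conjNe g _ hx1, g * i * g⁻¹, g * j * g⁻¹, conjInv g hi, conjInv g hj, by group⟩
      | one => simpa using (Subgroup.closure (TranslationSet G)).one_mem
      | mul x y hx hy px py =>
        have hrw : g * (x * y) * g⁻¹ = (g * x * g⁻¹) * (g * y * g⁻¹) := by group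
        rw [hrw]; exact mul_mem px py
      | inv x hx px =>
        have hrw : g * x⁻¹ * g⁻¹ = (g * x * g⁻¹)⁻¹ := by group
        rw [hrw]; exact inv_mem px
    rcases hsimple.eq_bot_or_eq_top_of_normal _ hnormal with hb | ht
    · exfalso
      have : k * k' ∈ Subgroup.closure (TranslationSet G) := Subgroup.subset_closure htmem
      rw [hb, Subgroup.mem_bot] at this
      exact htmem.1 this
    · exact ht
end

section
/- Let G be a group, i an involution of G with centralizer A = C_G(i), such that: any two distinct involutions of G generate an infinite dihedral group, and A is malnormal in G. Then A contains no translation, i.e., no element of A can be written as a product ab of two distinct involutions a, b of G. -/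
/-- A subgroup `H` of `G` is malnormal if for every `g ∉ H`, `gHg⁻¹ ∩ H = {1}`. -/
def Subgroup.IsMalnormal {G : Type*} [Group G] (H : Subgroup G) : Prop :=
  ∀ g : G, g ∉ H → ∀ x : G, x ∈ H → g * x * g⁻¹ ∈ H → x = 1

/-- Two elements generate an infinite dihedral group. -/
def GenInfiniteDihedral {G : Type*} [Group G] (a b : G) : Prop :=
  Nonempty ((Subgroup.closure {a, b} : Subgroup G) ≃* DihedralGroup 0)

private lemma aux_ncomm : (DihedralGroup.r 1 : DihedralGroup 0) * DihedralGroup.sr 0 ≠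
    DihedralGroup.sr 0 * DihedralGroup.r 1 := by
  rw [DihedralGroup.r_mul_sr, DihedralGroup.sr_mul_r]
  intro h
  injection h with h
  simp at h

private lemma aux_closure_comm {G : Type*} [Group G] {x y : G} (h : x * y = y * x) :
    ∀ g ∈ Subgroup.closure {x, y}, ∀ g' ∈ Subgroup.closure {x, y}, g * g' = g' * g := by
  have hsub : Subgroup.closure {x, y} ≤ Subgroup.centralizer {x, y} := by
    rw [Subgroup.closure_le]
    rintro z (rfl | rfl) w hw <;> rcases hw with rfl | rfl
    · rfl
    · exact h.symm
    · exact h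
    · rfl
  intro g hg g' hg'
  have h1 : g' ∈ Subgroup.centralizer {x, y} := hsub hg'
  have h2 : Subgroup.closure {x, y} ≤ Subgroup.centralizer {g'} := by
    rw [Subgroup.closure_le]
    intro z hz w hw
    rcases hw with rfl
    exact (h1 z hz).symm
  exact (h2 hg g' rfl).symm

private lemma aux_not_dih {G : Type*} [Group G] {x y : G} (h : x * y = y * x) :
    ¬ GenInfiniteDihedral x y := by
  rintro ⟨e⟩
  apply aux_ncomm
  have := aux_closure_comm h (e.symm (DihedralGroup.r 1)) (e.symm (DihedralGroup.r 1)).2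
    (e.symm (DihedralGroup.sr 0)) (e.symm (DihedralGroup.sr 0)).2
  have h2 : e.symm (DihedralGroup.r 1) * e.symm (DihedralGroup.sr 0)
      = e.symm (DihedralGroup.sr 0) * e.symm (DihedralGroup.r 1) := Subtype.ext this
  calc DihedralGroup.r 1 * DihedralGroup.sr 0
      = e (e.symm (DihedralGroup.r 1) * e.symm (DihedralGroup.sr 0)) := by simp
    _ = e (e.symm (DihedralGroup.sr 0) * e.symm (DihedralGroup.r 1)) := by rw [h2]
    _ = DihedralGroup.sr 0 * DihedralGroup.r 1 := by simp


/-- Let `i` be an involution of `G` with centralizer `A = C_G(i)`. If any two distinct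
involutions of `G` generate an infinite dihedral group and `A` is malnormal in `G`, then
`A` contains no translation: no element of `A` is a product of two distinct involutions. -/
theorem centralizer_contains_no_translation {G : Type*} [Group G]
    (i : G) (hi : IsInvolution i)
    (hdih : ∀ a b : G, IsInvolution a → IsInvolution b → a ≠ b → GenInfiniteDihedral a b)
    (hmal : (Subgroup.centralizer {i}).IsMalnormal) :
    ∀ a b : G, IsInvolution a → IsInvolution b → a ≠ b →
      a * b ∉ Subgroup.centralizer {i} := by
  intro a b ha hb hab ht
  have ha2 : a * a = 1 := by rw [← sq]; exact ha.1
  have hb2 : b * b = 1 := by rw [← sq]; exact hb.1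
  have hi2 : i * i = 1 := by rw [← sq]; exact hi.1
  have ha' : ∀ x : G, a * (a * x) = x := fun x => by rw [← mul_assoc, ha2, one_mul]
  have hb' : ∀ x : G, b * (b * x) = x := fun x => by rw [← mul_assoc, hb2, one_mul]
  have hi' : ∀ x : G, i * (i * x) = x := fun x => by rw [← mul_assoc, hi2, one_mul]
  have hbinv : b⁻¹ = b := by rw [← mul_one b⁻¹, ← hb2, ← mul_assoc, inv_mul_cancel, one_mul]
  have hti : (a * b) * i = i * (a * b) := (ht i rfl).symm
  have key : ∀ x : G, IsInvolution x → x ≠ i → x * i = i * x → False := fun x hx hxi hc =>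
    aux_not_dih hc (hdih x i hx hi hxi)
  have htne : a * b ≠ 1 := by
    intro h
    exact hab (by rw [← mul_one a, ← h, ← mul_assoc, ha2, one_mul])
  have hai : a ≠ i := by
    intro h
    rw [h] at hti
    have h1 := congrArg (fun x => i * x) hti
    simp only [mul_assoc, hi'] at h1
    exact key b hb (fun hbe => hab (h.trans hbe.symm)) h1
  have hbi : b ≠ i := by
    intro h
    rw [h] at hti
    have h1 := congrArg (fun x => x * i) hti
    simp only [mul_assoc, hi2, mul_one, hi'] at h1
    exact key a ha hai h1
  have hbA : b ∉ Subgroup.centralizer {i} := fun h =>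
    key b hb hbi ((h i rfl).symm)
  -- b i b = a i a
  have h1 : b * (i * b) = a * (i * a) := by
    have := congrArg (fun x => a * x * b) hti
    simp only [mul_assoc, ha', hb2, mul_one, hb'] at this
    exact this
  -- t commutes with k = b i b : both sides equal a (i b)
  have h2L : (a * b) * (b * (i * b)) = a * (i * b) := by simp only [mul_assoc, hb']
  have h2R : (b * (i * b)) * (a * b) = a * (i * b) := by
    rw [h1]; simp only [mul_assoc, ha']
  have h2 : (a * b) * (b * (i * b)) = (b * (i * b)) * (a * b) := h2L.trans h2R.symm
  -- conjugate of t by b lies in A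
  have h3 : b * (a * b) * b⁻¹ ∈ Subgroup.centralizer {i} := by
    intro y hy
    rcases hy with rfl
    rw [hbinv]
    have h4 := congrArg (fun x => b * x * b) h2
    simp only [mul_assoc, hb', hb2, mul_one] at h4 ⊢
    exact h4.symm
  exact htne (hmal b hbA (a * b) ht h3)
end

section
/- Let G be a group with a distinguished involution i such that all involutions of G are conjugate and any two distinct involutions of G generate an infinite dihedral group. Then for any HNN extension G₁ of G (over any pair of isomorphic subgroups), all involutions of G₁ are conjugate and any two distinct involutions of G₁ generate an infinite dihedral group. -/
/-!
By Britton's lemma, a cyclically reduced word of positive length has no power in the base group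
`G`. So if `b` and `α * b` have finite order, with `α ∈ G`, the reduced word of `b` has the shape
`h t⁻ᵘ g₀ ⋯ tᵘ g` with `g h` and `g α h` in the domain of `tᵘ`-conjugation; conjugating by `tᵘ g`
removes two letters and keeps `α` in `G`. By induction, `b` and `α` are simultaneously conjugate
into `G`. Hence every involution of the HNN extension is conjugate to one of `G`, and two distinct
involutions whose product had finite order would be conjugate to two distinct involutions of `G`
with product of finite order. Two involutions generate an infinite dihedral group exactly when
their product has infinite order.
-/

section Involution

variable {M N : Type*} [Group M] [Group N]

theorem IsInvolution.isOfFinOrder {x : M} (hx : IsInvolution x) : IsOfFinOrder x :=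
  isOfFinOrder_iff_pow_eq_one.2 ⟨2, two_pos, hx.1⟩

theorem isInvolution_map_iff {F : Type*} [FunLike F M N] [MonoidHomClass F M N] (f : F)
    (hf : Function.Injective f) {x : M} : IsInvolution (f x) ↔ IsInvolution x := by
  rw [IsInvolution, IsInvolution, ← map_pow, map_eq_one_iff f hf, map_ne_one_iff f hf]

theorem IsInvolution.of_map_eq_conj (f : M →* N) (hf : Function.Injective f) {x : N} {ξ : M}
    {e : N} (h : f ξ = e * x * e⁻¹) (hx : IsInvolution x) : IsInvolution ξ := by
  rwa [← isInvolution_map_iff f hf, h, ← MulAut.conj_apply,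
    isInvolution_map_iff _ (MulAut.conj e).injective]

theorem zpow_mul_eq_mul_zpow_neg {a c : M} (ha : a * a = 1) (hac : a * c * a = c⁻¹) (k : ℤ) :
    c ^ k * a = a * c ^ (-k) := by
  have ha' : a⁻¹ = a := inv_eq_of_mul_eq_one_right ha
  have hconj : a * c ^ k * a = c ^ (-k) := by
    calc a * c ^ k * a = (a * c * a⁻¹) ^ k := by rw [conj_zpow, ha']
      _ = c ^ (-k) := by rw [ha', hac, inv_zpow, zpow_neg]
  rw [← hconj, ← mul_assoc, ← mul_assoc, ha, one_mul]

end Involution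

namespace DihedralGroup

variable {M : Type*} [Group M]

-- `ZMod 0` is `ℤ` by definition, which the patterns `(k : ℤ)` use.
def liftInfinite (a c : M) (ha : a * a = 1) (hac : a * c * a = c⁻¹) : DihedralGroup 0 →* M where
  toFun
    | r (k : ℤ) => c ^ k
    | sr (k : ℤ) => a * c ^ k
  map_one' := zpow_zero c
  map_mul' := by
    have hca := zpow_mul_eq_mul_zpow_neg ha hac
    rintro (⟨i : ℤ⟩ | ⟨i : ℤ⟩) (⟨j : ℤ⟩ | ⟨j : ℤ⟩)
    · exact zpow_add c i j
    · show a * c ^ (j - i) = c ^ i * (a * c ^ j)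
      rw [← mul_assoc, hca, mul_assoc, ← zpow_add, neg_add_eq_sub]
    · show a * c ^ (i + j) = a * c ^ i * c ^ j
      rw [mul_assoc, ← zpow_add]
    · show c ^ (j - i) = a * c ^ i * (a * c ^ j)
      rw [mul_assoc, ← mul_assoc (c ^ _), hca, ← mul_assoc, ← mul_assoc, ha, one_mul,
        ← zpow_add, neg_add_eq_sub]

theorem liftInfinite_injective {a c : M} (ha : a * a = 1) (hac : a * c * a = c⁻¹)
    (hc : orderOf c = 0) : Function.Injective (liftInfinite a c ha hac) := by
  have hc_inj : Function.Injective (c ^ · : ℤ → M) :=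
    injective_zpow_iff_not_isOfFinOrder.2 (orderOf_eq_zero_iff.1 hc)
  refine (injective_iff_map_eq_one _).2 ?_
  rintro (⟨k : ℤ⟩ | ⟨k : ℤ⟩) h
  · rw [hc_inj (h.trans (zpow_zero c).symm)]
    rfl
  · -- `a` would be a power of `c`, hence commute with `c`, whereas `a c a = c⁻¹`
    have ha_eq : a = c ^ (-k) := by
      rw [zpow_neg]
      exact eq_inv_of_mul_eq_one_left h
    have hcomm := zpow_mul_eq_mul_zpow_neg ha hac 1
    rw [ha_eq, ← zpow_add, ← zpow_add] at hcomm
    have := hc_inj hcomm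
    omega

theorem range_liftInfinite (a c : M) (ha : a * a = 1) (hac : a * c * a = c⁻¹) :
    (liftInfinite a c ha hac).range = Subgroup.closure {a, a * c} := by
  have ha_mem : a ∈ Subgroup.closure {a, a * c} := Subgroup.subset_closure (by simp)
  have hac_mem : a * c ∈ Subgroup.closure {a, a * c} := Subgroup.subset_closure (by simp)
  have hc_mem : c ∈ Subgroup.closure {a, a * c} := by
    simpa [← mul_assoc, ha] using mul_mem ha_mem hac_mem
  apply le_antisymm
  · rintro _ ⟨⟨k : ℤ⟩ | ⟨k : ℤ⟩, rfl⟩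
    · exact zpow_mem hc_mem k
    · exact mul_mem ha_mem (zpow_mem hc_mem k)
  · rw [Subgroup.closure_le]
    rintro x (rfl | rfl)
    · exact ⟨sr 0, show x * c ^ (0 : ℤ) = x by rw [zpow_zero, mul_one]⟩
    · exact ⟨sr 1, show a * c ^ (1 : ℤ) = a * c by rw [zpow_one]⟩

theorem exists_eq_sr_of_isInvolution {x : DihedralGroup 0} (hx : IsInvolution x) :
    ∃ i, x = sr i := by
  obtain ⟨hx2, hx1⟩ := hx
  cases x with
  | r i =>
    rw [r_pow, one_def, r.injEq, mul_eq_zero] at hx2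
    exact (hx1 (by rw [hx2.resolve_right two_ne_zero, r_zero])).elim
  | sr i => exact ⟨i, rfl⟩

theorem orderOf_r_of_ne_zero {i : ZMod 0} (hi : i ≠ 0) : orderOf (r i) = 0 := by
  rw [orderOf_eq_zero_iff']
  intro n hn
  rw [r_pow, one_def, Ne, r.injEq]
  exact mul_ne_zero hi (Nat.cast_ne_zero.2 hn.ne')

theorem orderOf_mul_of_isInvolution {x y : DihedralGroup 0} (hx : IsInvolution x)
    (hy : IsInvolution y) (hxy : x ≠ y) : orderOf (x * y) = 0 := by
  obtain ⟨i, rfl⟩ := exists_eq_sr_of_isInvolution hx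
  obtain ⟨j, rfl⟩ := exists_eq_sr_of_isInvolution hy
  rw [sr_mul_sr]
  exact orderOf_r_of_ne_zero (sub_ne_zero.2 fun h => hxy (h ▸ rfl))

end DihedralGroup

section GenInfiniteDihedral

variable {M : Type*} [Group M]

theorem GenInfiniteDihedral.orderOf_mul_eq_zero {a b : M} (h : GenInfiniteDihedral a b)
    (ha : IsInvolution a) (hb : IsInvolution b) (hab : a ≠ b) : orderOf (a * b) = 0 := by
  obtain ⟨e⟩ := h
  let a' : Subgroup.closure {a, b} := ⟨a, Subgroup.subset_closure (by simp)⟩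
  let b' : Subgroup.closure {a, b} := ⟨b, Subgroup.subset_closure (by simp)⟩
  have he : ∀ x : Subgroup.closure {a, b}, IsInvolution (x : M) → IsInvolution (e x) :=
    fun x hx => (isInvolution_map_iff e e.injective).2
      ((isInvolution_map_iff (Subgroup.subtype _) Subtype.coe_injective).1 hx)
  calc orderOf (a * b) = orderOf (e a' * e b') := by
        rw [← map_mul, MulEquiv.orderOf_eq, ← Subgroup.orderOf_coe]; rfl
    _ = 0 := DihedralGroup.orderOf_mul_of_isInvolution (he a' ha) (he b' hb)
        (e.injective.ne fun h => hab (congrArg Subtype.val h))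

theorem genInfiniteDihedral_of_orderOf_mul_eq_zero {a b : M} (ha : a ^ 2 = 1) (hb : b ^ 2 = 1)
    (hab : orderOf (a * b) = 0) : GenInfiniteDihedral a b := by
  have haa : a * a = 1 := by rwa [← pow_two]
  have hbb : b * b = 1 := by rwa [← pow_two]
  have hac : a * (a * b) * a = (a * b)⁻¹ := by
    rw [mul_inv_rev, inv_eq_of_mul_eq_one_right haa, inv_eq_of_mul_eq_one_right hbb,
      ← mul_assoc, haa, one_mul]
  have hrange := DihedralGroup.range_liftInfinite a (a * b) haa hac
  rw [← mul_assoc, haa, one_mul] at hrange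
  exact ⟨(MulEquiv.subgroupCongr hrange.symm).trans
    (MonoidHom.ofInjective (DihedralGroup.liftInfinite_injective haa hac hab)).symm⟩

end GenInfiniteDihedral

theorem List.IsChain.flatten_replicate {α : Type*} {R : α → α → Prop} {l : List α}
    (hl : l.IsChain R) (hcyc : ∀ x ∈ l.getLast?, ∀ y ∈ l.head?, R x y) (m : ℕ) :
    (List.replicate m l).flatten.IsChain R := by
  rcases eq_or_ne l [] with rfl | hne
  · simp
  rw [List.isChain_flatten (by simp [List.mem_replicate, hne.symm])]
  exact ⟨by simp [List.mem_replicate, hl], List.isChain_replicate_of_rel m hcyc⟩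

namespace HNNExtension

open NormalWord

variable {G : Type*} [Group G] {A B : Subgroup G} {φ : A ≃* B}

theorem toSubgroupEquiv_eq_conj (u : ℤˣ) {g : G} (hg : g ∈ toSubgroup A B u) :
    (of (toSubgroupEquiv φ u ⟨g, hg⟩ : G) : HNNExtension G A B φ) =
      t ^ (u : ℤ) * of g * (t ^ (u : ℤ))⁻¹ := by
  rcases Int.units_eq_one_or u with rfl | rfl
  · simp only [Units.val_one, zpow_one]
    exact equiv_eq_conj ⟨g, hg⟩
  · simp only [Units.val_neg, Units.val_one, zpow_neg, zpow_one, inv_inv]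
    exact equiv_symm_eq_conj ⟨g, hg⟩

namespace NormalWord.ReducedWord

variable (φ)

theorem prod_pow_notMem_range (w : ReducedWord G A B) (hhead : w.head = 1)
    (hne : w.toList ≠ [])
    (hcyc : ∀ x ∈ w.toList.getLast?, ∀ y ∈ w.toList.head?, x.2 ∈ toSubgroup A B x.1 → x.1 = y.1)
    {m : ℕ} (hm : m ≠ 0) : (w.prod φ) ^ m ∉ (of.range : Subgroup (HNNExtension G A B φ)) := by
  intro hmem
  let wm : ReducedWord G A B :=
    ⟨1, (List.replicate m w.toList).flatten, w.chain.flatten_replicate hcyc m⟩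
  have hprod : wm.prod φ = (w.prod φ) ^ m := by
    simp [wm, ReducedWord.prod, hhead, List.map_flatten, List.prod_flatten, List.map_replicate,
      List.prod_replicate]
  have := HNNExtension.ReducedWord.toList_eq_nil_of_mem_of_range φ wm (hprod ▸ hmem)
  simp [wm, List.flatten_eq_nil_iff, List.mem_replicate, hm, hne] at this

theorem mem_toSubgroup_and_eq_cons_of_pow_mem_range (w : ReducedWord G A B)
    {L₀ : List (ℤˣ × G)} {u : ℤˣ} {g : G} (hw : w.toList = L₀ ++ [(u, g)]) {m : ℕ} (hm : m ≠ 0)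
    (hpow : (w.prod φ) ^ m ∈ (of.range : Subgroup (HNNExtension G A B φ))) :
    g * w.head ∈ toSubgroup A B u ∧ ∃ g₀ L₁, L₀ = (-u, g₀) :: L₁ := by
  -- conjugating by `of w.head` moves the head into the last letter
  set J := L₀ ++ [(u, g * w.head)]
  have hJ : J.IsChain fun a b => a.2 ∈ toSubgroup A B a.1 → a.1 = b.1 := by
    have hchain := w.chain
    rw [hw, List.isChain_append] at hchain
    exact List.isChain_append.2 ⟨hchain.1, List.isChain_singleton _, by simpa using hchain.2.2⟩
  let w' : ReducedWord G A B := ⟨1, J, hJ⟩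
  have hconj : of w.head * w'.prod φ * (of w.head)⁻¹ = w.prod φ := by
    simp [w', J, ReducedWord.prod, hw, mul_assoc]
  have hpow' : (w'.prod φ) ^ m ∈ (of.range : Subgroup (HNNExtension G A B φ)) := by
    have : (w'.prod φ) ^ m = (of w.head)⁻¹ * (w.prod φ) ^ m * of w.head := by
      rw [← hconj, conj_pow]; group
    rw [this]
    exact mul_mem (mul_mem (inv_mem ⟨_, rfl⟩) hpow) ⟨_, rfl⟩
  have hcyc := mt (w'.prod_pow_notMem_range φ rfl (by simp [w', J]) · hm) (not_not.2 hpow')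
  push Not at hcyc
  obtain ⟨x, hx, y, hy, hmem, hne⟩ := hcyc
  simp only [w', J, List.getLast?_append, List.getLast?_singleton, Option.some_or,
    Option.mem_some_iff] at hx
  subst hx
  refine ⟨hmem, ?_⟩
  rcases L₀ with _ | ⟨⟨v, g₀⟩, L₁⟩
  · simp [w', J] at hy
    exact absurd (hy ▸ rfl) hne
  · simp only [w', J, List.cons_append, List.head?_cons, Option.mem_some_iff] at hy
    subst hy
    have hv : v = -u := Int.units_ne_iff_eq_neg.1 (Ne.symm hne)
    exact ⟨g₀, L₁, by rw [hv]⟩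

theorem exists_conj_eq_of_eq_cons (w : ReducedWord G A B) {u : ℤˣ} {g₀ g : G}
    {L₁ : List (ℤˣ × G)} (hw : w.toList = (-u, g₀) :: L₁ ++ [(u, g)])
    (hgh : g * w.head ∈ toSubgroup A B u) :
    ∃ w' : ReducedWord G A B, w'.toList = L₁ ∧
      t ^ (u : ℤ) * of g * w.prod φ * (t ^ (u : ℤ) * of g)⁻¹ = w'.prod φ := by
  refine ⟨⟨(toSubgroupEquiv φ u ⟨_, hgh⟩ : G) * g₀, L₁,
    w.chain.infix ⟨[(-u, g₀)], [(u, g)], by rw [hw]; rfl⟩⟩, rfl, ?_⟩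
  simp only [ReducedWord.prod, hw, map_mul, toSubgroupEquiv_eq_conj, List.cons_append,
    List.map_cons, List.map_append, List.prod_cons, List.prod_append, List.map_nil,
    List.prod_nil, Units.val_neg, zpow_neg]
  group

theorem exists_conj_mem_range (w : ReducedWord G A B) (α : G) (hw : IsOfFinOrder (w.prod φ))
    (hαw : IsOfFinOrder (of α * w.prod φ)) :
    ∃ e : HNNExtension G A B φ, e * of α * e⁻¹ ∈ (of.range : Subgroup (HNNExtension G A B φ)) ∧
      e * w.prod φ * e⁻¹ ∈ (of.range : Subgroup (HNNExtension G A B φ)) := by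
  induction hn : w.toList.length using Nat.strong_induction_on generalizing w α with
  | _ n ih =>
  rcases List.eq_nil_or_concat' w.toList with hnil | ⟨L₀, ⟨u, g⟩, hL⟩
  · exact ⟨1, by simp, by simp [ReducedWord.prod, hnil]⟩
  obtain ⟨k, hk, hwk⟩ := hw.exists_pow_eq_one
  obtain ⟨m, hm, hαwm⟩ := hαw.exists_pow_eq_one
  obtain ⟨hgh, g₀, L₁, rfl⟩ := w.mem_toSubgroup_and_eq_cons_of_pow_mem_range φ hL hk.ne'
    (by rw [hwk]; exact one_mem _)
  -- `of α * b` is spelled by the letters of `b` behind the head `α * w.head`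
  let αw : ReducedWord G A B := ⟨α * w.head, w.toList, w.chain⟩
  have hαw_prod : αw.prod φ = of α * w.prod φ := by simp [αw, ReducedWord.prod, mul_assoc]
  have hgαh := (αw.mem_toSubgroup_and_eq_cons_of_pow_mem_range φ hL hm.ne'
    (by rw [hαw_prod, hαwm]; exact one_mem _)).1
  have hgα : g * α * g⁻¹ ∈ toSubgroup A B u := by
    simpa [αw, mul_assoc] using mul_mem hgαh (inv_mem hgh)
  obtain ⟨w', rfl, hw'⟩ := w.exists_conj_eq_of_eq_cons φ hL hgh
  have hα : (t ^ (u : ℤ) * of g * of α * (t ^ (u : ℤ) * of g)⁻¹ : HNNExtension G A B φ) =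
      of (toSubgroupEquiv φ u ⟨_, hgα⟩ : G) := by
    rw [toSubgroupEquiv_eq_conj, map_mul, map_mul, map_inv]
    group
  set e₁ : HNNExtension G A B φ := t ^ (u : ℤ) * of g
  obtain ⟨e₂, h₁, h₂⟩ := ih _ (by simp [hL] at hn; omega) w' _
    ((isConj_iff.2 ⟨e₁, hw'⟩).isOfFinOrder hw)
    ((isConj_iff.2 ⟨e₁, by rw [← conj_mul, hα, hw']⟩).isOfFinOrder hαw) rfl
  have hcomp : ∀ x, e₂ * e₁ * x * (e₂ * e₁)⁻¹ = e₂ * (e₁ * x * e₁⁻¹) * e₂⁻¹ := fun x => by group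
  exact ⟨e₂ * e₁, by rwa [hcomp, hα], by rwa [hcomp, hw']⟩

end NormalWord.ReducedWord

theorem ReducedWord.prod_surjective (φ : A ≃* B) :
    Function.Surjective (ReducedWord.prod φ) := fun x => by
  obtain ⟨d⟩ := TransversalPair.nonempty G A B
  exact ⟨(NormalWord.equiv φ d x).toReducedWord, (NormalWord.equiv φ d).symm_apply_apply x⟩

theorem exists_conj_mem_range_of_isOfFinOrder {x : HNNExtension G A B φ} (hx : IsOfFinOrder x) :
    ∃ e : HNNExtension G A B φ, e * x * e⁻¹ ∈ (of.range : Subgroup (HNNExtension G A B φ)) := by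
  obtain ⟨w, rfl⟩ := ReducedWord.prod_surjective φ x
  obtain ⟨e, -, he⟩ := w.exists_conj_mem_range φ 1 hx (by rwa [map_one, one_mul])
  exact ⟨e, he⟩

theorem exists_conj_mem_range_of_isOfFinOrder_mul {a b : HNNExtension G A B φ}
    (ha : IsOfFinOrder a) (hb : IsOfFinOrder b) (hab : IsOfFinOrder (a * b)) :
    ∃ e : HNNExtension G A B φ, e * a * e⁻¹ ∈ (of.range : Subgroup (HNNExtension G A B φ)) ∧
      e * b * e⁻¹ ∈ (of.range : Subgroup (HNNExtension G A B φ)) := by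
  obtain ⟨e₁, α, hα⟩ := exists_conj_mem_range_of_isOfFinOrder ha
  obtain ⟨w, hw⟩ := ReducedWord.prod_surjective φ (e₁ * b * e₁⁻¹)
  have hb' : IsOfFinOrder (w.prod φ) := hw ▸ (isConj_iff.2 ⟨e₁, rfl⟩).isOfFinOrder hb
  have hab' : IsOfFinOrder (of α * w.prod φ) := by
    rw [hα, hw, conj_mul]
    exact (isConj_iff.2 ⟨e₁, rfl⟩).isOfFinOrder hab
  obtain ⟨e₂, h₁, h₂⟩ := w.exists_conj_mem_range φ α hb' hab'
  have hcomp : ∀ x, e₂ * e₁ * x * (e₂ * e₁)⁻¹ = e₂ * (e₁ * x * e₁⁻¹) * e₂⁻¹ := fun x => by group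
  exact ⟨e₂ * e₁, by rwa [hcomp, ← hα], by rwa [hcomp, ← hw]⟩

end HNNExtension

theorem hnn_preserves_involution_conditions_general {G : Type*} [Group G]
    (hconjG : ∀ a b : G, IsInvolution a → IsInvolution b → IsConj a b)
    (hdihG : ∀ a b : G, IsInvolution a → IsInvolution b → a ≠ b → GenInfiniteDihedral a b)
    (A B : Subgroup G) (φ : A ≃* B) :
    (∀ a b : HNNExtension G A B φ, IsInvolution a → IsInvolution b → IsConj a b) ∧
    (∀ a b : HNNExtension G A B φ, IsInvolution a → IsInvolution b → a ≠ b →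
      GenInfiniteDihedral a b) := by
  have base_involution {x : HNNExtension G A B φ} {ξ : G} {e : HNNExtension G A B φ}
      (h : HNNExtension.of ξ = e * x * e⁻¹) (hx : IsInvolution x) : IsInvolution ξ :=
    hx.of_map_eq_conj _ (HNNExtension.of_injective φ) h
  constructor
  · intro a b ha hb
    obtain ⟨e, α, hα⟩ := HNNExtension.exists_conj_mem_range_of_isOfFinOrder ha.isOfFinOrder
    obtain ⟨f, β, hβ⟩ := HNNExtension.exists_conj_mem_range_of_isOfFinOrder hb.isOfFinOrder
    have hαβ : IsConj (HNNExtension.of α : HNNExtension G A B φ) (HNNExtension.of β) :=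
      HNNExtension.of.map_isConj (hconjG α β (base_involution hα ha) (base_involution hβ hb))
    rw [hα, hβ] at hαβ
    exact (isConj_iff.2 ⟨e, rfl⟩).trans (hαβ.trans (isConj_iff.2 ⟨f, rfl⟩).symm)
  · intro a b ha hb hab
    refine genInfiniteDihedral_of_orderOf_mul_eq_zero ha.1 hb.1 ?_
    by_contra hfin
    obtain ⟨e, ⟨α, hα⟩, ⟨β, hβ⟩⟩ := HNNExtension.exists_conj_mem_range_of_isOfFinOrder_mul
      ha.isOfFinOrder hb.isOfFinOrder (orderOf_ne_zero_iff.1 hfin)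
    have hαi := base_involution hα ha
    have hβi := base_involution hβ hb
    have hαβ : α ≠ β := fun h => hab (conj_injective (hα.symm.trans (h ▸ hβ)))
    apply hfin
    calc orderOf (a * b) = orderOf (α * β) := by
          rw [← orderOf_injective _ (HNNExtension.of_injective φ), map_mul, hα, hβ, conj_mul,
            ← MulAut.conj_apply, MulEquiv.orderOf_eq]
      _ = 0 := (hdihG α β hαi hβi hαβ).orderOf_mul_eq_zero hαi hβi hαβ

/-- Let `G` be a group with an involution `i` such that all involutions of `G` are
conjugate and any two distinct involutions of `G` generate an infinite dihedral group.
Then in any HNN extension `G₁` of `G` (over any pair of isomorphic subgroups `A ≃* B`),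
all involutions are conjugate and any two distinct involutions generate an infinite
dihedral group. -/
theorem hnn_preserves_involution_conditions {G : Type*} [Group G]
    (i : G) (hi : IsInvolution i)
    (hconjG : ∀ a b : G, IsInvolution a → IsInvolution b → IsConj a b)
    (hdihG : ∀ a b : G, IsInvolution a → IsInvolution b → a ≠ b → GenInfiniteDihedral a b)
    (A B : Subgroup G) (φ : A ≃* B) :
    (∀ a b : HNNExtension G A B φ, IsInvolution a → IsInvolution b → IsConj a b) ∧
    (∀ a b : HNNExtension G A B φ, IsInvolution a → IsInvolution b → a ≠ b →
      GenInfiniteDihedral a b) :=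
  hnn_preserves_involution_conditions_general hconjG hdihG A B φ
end

section
/- Let G₁ = ⟨G, t | tht⁻¹ = α(h), h ∈ H⟩ be an HNN extension of a group G over an isomorphism α: H → K of subgroups of G. Suppose K is quasi-malnormal in G₁ and |gHg⁻¹ ∩ K| ≤ 2 for every g ∈ G. If x ∈ G is not contained in any G₁-conjugate of H or of K, then every g ∈ G₁ with gxg⁻¹ ∈ G lies in G. -/
/-- A set has at most two elements. -/
def AtMostTwo {α : Type*} (S : Set α) : Prop :=
  ∀ a ∈ S, ∀ b ∈ S, ∀ c ∈ S, a = b ∨ a = c ∨ b = c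

/-- The intersection `gKg⁻¹ ∩ K` as a set. -/
def ConjInter {G : Type*} [Group G] (g : G) (K : Subgroup G) : Set G :=
  {x : G | x ∈ K ∧ g⁻¹ * x * g ∈ K}

/-- A subgroup `K` of `G` is quasi-malnormal if `|gKg⁻¹ ∩ K| ≤ 2` for all `g ∉ K`. -/
def Subgroup.IsQuasiMalnormal {G : Type*} [Group G] (K : Subgroup G) : Prop :=
  ∀ g : G, g ∉ K → AtMostTwo (ConjInter g K)

/-! If the reduced word of `g` ends in `t ^ u * c`, then `c * x * c⁻¹` is not in the associated
subgroup `A` or `B`, so the word of `g`, followed by `x` and the inverse word, has no pinch at the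
junction. It is a reduced word for `g * x * g⁻¹` that contains `t`, and Britton's lemma rules
out `g * x * g⁻¹ ∈ G`. -/

namespace HNNExtension.NormalWord.ReducedWord

variable {G : Type*} [Group G] {A B : Subgroup G} (φ : A ≃* B)

def invList (h : G) (l : List (ℤˣ × G)) : G × List (ℤˣ × G) :=
  l.foldl (fun a p => (p.2⁻¹, (-p.1, a.1) :: a.2)) (h⁻¹, [])

@[simp]
lemma invList_concat (h : G) (l : List (ℤˣ × G)) (u : ℤˣ) (c : G) :
    invList h (l ++ [(u, c)]) = (c⁻¹, (-u, (invList h l).1) :: (invList h l).2) := by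
  simp [invList]

lemma of_invList_mul_prod (h : G) (l : List (ℤˣ × G)) :
    (of (invList h l).1 * ((invList h l).2.map fun p => t ^ (p.1 : ℤ) * of p.2).prod
      : HNNExtension G A B φ) = (of h * (l.map fun p => t ^ (p.1 : ℤ) * of p.2).prod)⁻¹ := by
  induction l using List.reverseRecOn with
  | nil => simp [invList]
  | append_singleton l p ih =>
    obtain ⟨u, c⟩ := p
    simpa [mul_assoc] using ih

variable (A B) in
abbrev NoPinch (a b : ℤˣ × G) : Prop :=
  a.2 ∈ toSubgroup A B a.1 → a.1 = b.1

lemma noPinch_inv {u v : ℤˣ} {c c' c'' : G} (h : NoPinch A B (u, c) (v, c')) :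
    NoPinch A B (-v, c⁻¹) (-u, c'') := by
  intro hc
  rcases Int.units_eq_one_or u with rfl | rfl <;>
    rcases Int.units_eq_one_or v with rfl | rfl <;> simp_all

lemma isChain_cons_invList (h : G) {l : List (ℤˣ × G)} {u : ℤˣ} {c : G}
    (hl : (l ++ [(u, c)]).IsChain (NoPinch A B)) :
    ((-u, (invList h l).1) :: (invList h l).2).IsChain (NoPinch A B) := by
  induction l using List.reverseRecOn generalizing u c with
  | nil => exact .singleton _
  | append_singleton l p ih =>
    obtain ⟨u₀, c₀⟩ := p
    rw [List.append_assoc, List.singleton_append, List.isChain_append_cons_cons] at hl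
    rw [invList_concat, List.isChain_cons_cons]
    exact ⟨noPinch_inv hl.2.1, ih hl.1⟩

lemma isChain_invList (h : G) {l : List (ℤˣ × G)} (hl : l.IsChain (NoPinch A B)) :
    (invList h l).2.IsChain (NoPinch A B) := by
  rcases l.eq_nil_or_concat' with rfl | ⟨l, ⟨u, c⟩, rfl⟩
  · exact .nil
  · simpa using isChain_cons_invList h hl

def inv (w : ReducedWord G A B) : ReducedWord G A B where
  head := (invList w.head w.toList).1
  toList := (invList w.head w.toList).2
  chain := isChain_invList w.head w.chain

lemma prod_inv (w : ReducedWord G A B) : w.inv.prod φ = (w.prod φ)⁻¹ :=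
  of_invList_mul_prod φ w.head w.toList

theorem prod_conj_notMem_range (w : ReducedWord G A B) {l : List (ℤˣ × G)} {u : ℤˣ} {c : G}
    (hw : w.toList = l ++ [(u, c)]) {y : G} (hy : c * y * c⁻¹ ∉ toSubgroup A B u) :
    w.prod φ * of y * (w.prod φ)⁻¹ ∉ (of : G →* HNNExtension G A B φ).range := by
  have hchain := w.chain
  rw [hw, List.isChain_append] at hchain
  obtain ⟨hl, -, hjunction⟩ := hchain
  let conjWord : ReducedWord G A B :=
    { head := w.head
      toList := l ++ (u, c * y * c⁻¹) :: w.inv.toList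
      chain := by
        refine hl.append (w.inv.chain.cons fun _ _ h => absurd h hy) ?_
        rintro a ha _ ⟨⟩
        exact hjunction a ha (u, c) rfl }
  have hprod : conjWord.prod φ = w.prod φ * of y * (w.prod φ)⁻¹ := by
    have hinv : of c⁻¹ * (w.inv.toList.map fun p => t ^ (p.1 : ℤ) * of p.2).prod
        = (w.prod φ)⁻¹ := by
      simpa [ReducedWord.prod, inv, hw] using prod_inv φ w
    have htail := eq_inv_mul_of_mul_eq hinv
    generalize (w.prod φ)⁻¹ = q at htail
    simp [conjWord, ReducedWord.prod, hw, htail, mul_assoc]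
  rw [← hprod]
  intro hmem
  simpa [conjWord] using HNNExtension.ReducedWord.toList_eq_nil_of_mem_of_range φ conjWord hmem

end HNNExtension.NormalWord.ReducedWord

open HNNExtension HNNExtension.NormalWord

theorem hnn_conjugator_in_base_general {G : Type*} [Group G] (A B : Subgroup G) (φ : A ≃* B)
    (x : G)
    (hx : ∀ g₁ : HNNExtension G A B φ,
      g₁ * HNNExtension.of x * g₁⁻¹ ∉ A.map (HNNExtension.of : G →* HNNExtension G A B φ) ∧
      g₁ * HNNExtension.of x * g₁⁻¹ ∉ B.map (HNNExtension.of : G →* HNNExtension G A B φ)) :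
    ∀ g : HNNExtension G A B φ,
      g * HNNExtension.of x * g⁻¹ ∈ (HNNExtension.of : G →* HNNExtension G A B φ).range →
      g ∈ (HNNExtension.of : G →* HNNExtension G A B φ).range := by
  intro g hg
  obtain ⟨d⟩ := TransversalPair.nonempty G A B
  obtain ⟨w, rfl⟩ : ∃ w : ReducedWord G A B, w.prod φ = g :=
    ⟨(equiv φ d g).toReducedWord, (equiv φ d).symm_apply_apply g⟩
  rcases w.toList.eq_nil_or_concat' with hnil | ⟨l, ⟨u, c⟩, hw⟩
  · exact ⟨w.head, by simp [ReducedWord.prod, hnil]⟩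
  · refine absurd hg (w.prod_conj_notMem_range φ hw fun hmem => ?_)
    rcases Int.units_eq_one_or u with rfl | rfl
    · exact (hx (of c)).1 ⟨_, hmem, by simp⟩
    · exact (hx (of c)).2 ⟨_, hmem, by simp⟩

/-- Let `G₁ = ⟨G, t | t a t⁻¹ = φ(a), a ∈ A⟩` be an HNN extension over `φ : A ≃* B`, with
`B` quasi-malnormal in `G₁` and `|gAg⁻¹ ∩ B| ≤ 2` for every `g ∈ G`. If `x ∈ G` lies in
no `G₁`-conjugate of `A` nor of `B`, then every `g ∈ G₁` with `g x g⁻¹ ∈ G` lies in `G`. -/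
theorem hnn_conjugator_in_base {G : Type*} [Group G] (A B : Subgroup G) (φ : A ≃* B)
    (hquasi : (B.map (HNNExtension.of : G →* HNNExtension G A B φ)).IsQuasiMalnormal)
    (hinter : ∀ g : G, AtMostTwo {x : G | x ∈ B ∧ g⁻¹ * x * g ∈ A})
    (x : G)
    (hx : ∀ g₁ : HNNExtension G A B φ,
      g₁ * HNNExtension.of x * g₁⁻¹ ∉ A.map (HNNExtension.of : G →* HNNExtension G A B φ) ∧
      g₁ * HNNExtension.of x * g₁⁻¹ ∉ B.map (HNNExtension.of : G →* HNNExtension G A B φ)) :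
    ∀ g : HNNExtension G A B φ,
      g * HNNExtension.of x * g⁻¹ ∈ (HNNExtension.of : G →* HNNExtension G A B φ).range →
      g ∈ (HNNExtension.of : G →* HNNExtension G A B φ).range :=
  hnn_conjugator_in_base_general A B φ x hx
end

section
/- Let G₁ = ⟨G, t | tht⁻¹ = α(h), h ∈ H⟩ be an HNN extension of G over an isomorphism α: H → K of subgroups of G, with K quasi-malnormal in G₁ and |gHg⁻¹ ∩ K| ≤ 2 for all g ∈ G. If x ∈ H has order > 2, then every g ∈ G₁ with gxg⁻¹ ∈ H lies in G. -/
/-- Let `G₁ = ⟨G, t | t a t⁻¹ = φ(a), a ∈ A⟩` be an HNN extension over `φ : A ≃* B`, with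
`B` quasi-malnormal in `G₁` and `|gAg⁻¹ ∩ B| ≤ 2` for every `g ∈ G`. If `x ∈ A` has
order `> 2`, then every `g ∈ G₁` with `g x g⁻¹ ∈ A` lies in `G`. -/
theorem hnn_conjugator_in_base_of_mem_edge {G : Type*} [Group G]
    (A B : Subgroup G) (φ : A ≃* B)
    (hquasi : (B.map (HNNExtension.of : G →* HNNExtension G A B φ)).IsQuasiMalnormal)
    (hinter : ∀ g : G, AtMostTwo {x : G | x ∈ B ∧ g⁻¹ * x * g ∈ A})
    (x : G) (hxA : x ∈ A) (hx1 : x ≠ 1) (hx2 : x ^ 2 ≠ 1) :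
    ∀ g : HNNExtension G A B φ,
      g * HNNExtension.of x * g⁻¹ ∈ A.map (HNNExtension.of : G →* HNNExtension G A B φ) →
      g ∈ (HNNExtension.of : G →* HNNExtension G A B φ).range := by
  intro g hg
  classical
  set of' : G →* HNNExtension G A B φ := HNNExtension.of with hof
  obtain ⟨a, haA, ha⟩ := hg
  set K : Subgroup (HNNExtension G A B φ) := B.map of' with hK
  set q : HNNExtension G A B φ := HNNExtension.t * g⁻¹ * HNNExtension.t⁻¹ with hqdef
  by_cases hq : q ∈ K
  · -- Then g⁻¹ = t⁻¹ * of b * t = of (φ.symm b) ∈ of(A), so g ∈ range.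
    obtain ⟨b, hbB, hb⟩ := hq
    have hginv : g⁻¹ = of' ((φ.symm ⟨b, hbB⟩ : A) : G) := by
      have := HNNExtension.equiv_symm_eq_conj (φ := φ) ⟨b, hbB⟩
      rw [← hof] at this
      rw [this, hb, hqdef]
      group
    refine ⟨(((φ.symm ⟨b, hbB⟩ : A) : G))⁻¹, ?_⟩
    rw [map_inv, ← hginv, inv_inv]
  · -- Contradiction: 1, z, z² lie in ConjInter q K with z = of (φ x) of order > 2.
    exfalso
    set xa : A := ⟨x, hxA⟩ with hxa
    set z : HNNExtension G A B φ := of' ((φ xa : B) : G) with hz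
    have hzK : z ∈ K := ⟨(φ xa : B), (φ xa).2, rfl⟩
    have hqinv : q⁻¹ = HNNExtension.t * g * HNNExtension.t⁻¹ := by
      rw [hqdef]; group
    have hconj : q⁻¹ * z * q = of' ((φ ⟨a, haA⟩ : B) : G) := by
      have h1 : z = HNNExtension.t * of' x * HNNExtension.t⁻¹ :=
        HNNExtension.equiv_eq_conj (φ := φ) xa
      have h2 : of' ((φ ⟨a, haA⟩ : B) : G) =
          HNNExtension.t * of' a * HNNExtension.t⁻¹ :=
        HNNExtension.equiv_eq_conj (φ := φ) ⟨a, haA⟩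
      rw [hqinv, h1, h2, ha]
      simp only [hqdef]
      group
    have hzc : z ∈ ConjInter q K := ⟨hzK, hconj ▸ ⟨(φ ⟨a, haA⟩ : B), (φ ⟨a, haA⟩).2, rfl⟩⟩
    have hz2c : z * z ∈ ConjInter q K := by
      refine ⟨K.mul_mem hzK hzK, ?_⟩
      have : q⁻¹ * (z * z) * q = (q⁻¹ * z * q) * (q⁻¹ * z * q) := by group
      rw [this]
      exact K.mul_mem hzc.2 hzc.2
    have h1c : (1 : HNNExtension G A B φ) ∈ ConjInter q K := by
      refine ⟨K.one_mem, ?_⟩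
      simpa using K.one_mem
    have hinj : Function.Injective of' := HNNExtension.of_injective φ
    have hzne1 : z ≠ 1 := by
      intro h
      apply hx1
      have : ((φ xa : B) : G) = ((1 : G)) := hinj (by simpa using h)
      have : (φ xa : B) = 1 := Subtype.ext this
      have : xa = 1 := φ.injective (by simpa using this)
      simpa [hxa] using congrArg Subtype.val this
    have hzzne1 : z * z ≠ 1 := by
      intro h
      apply hx2
      have hmul : z * z = of' (((φ xa : B) : G) * ((φ xa : B) : G)) := by
        rw [hz, map_mul]
      have h1 : ((φ xa : B) : G) * ((φ xa : B) : G) = 1 := hinj (by rw [← hmul, h, map_one])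
      have h2 : (φ xa) * (φ xa) = 1 := Subtype.ext (by push_cast; simpa using h1)
      have h3 : xa * xa = 1 := φ.injective (by rw [map_mul]; simpa using h2)
      have := congrArg Subtype.val h3
      simpa [hxa, pow_two] using this
    rcases hquasi q hq z hzc 1 h1c (z * z) hz2c with h | h | h
    · exact hzne1 h
    · exact hzne1 (by
        have : z * z = z * 1 := by rw [← h, mul_one]
        simpa using mul_left_cancel this)
    · exact hzzne1 h.symm
end

section
/- Let G be a group, i an involution with centralizer A, such that any two distinct involutions generate an infinite dihedral group and the centralizer of any pair of distinct involutions is trivial. Fix an involution j ≠ i. Suppose that every involution k with (ik)ᵐ = (ij)ⁿ for some nonzero m, n is A-conjugate to j. Then for every n > 0 there exists a unique involution k ∈ G with (ik)ⁿ = ij. -/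
/-- Let `G` be a group with an involution `i` and centralizer `A = C_G(i)`, in which any
two distinct involutions generate an infinite dihedral group and the centralizer of any
pair of distinct involutions is trivial. Fix an involution `j ≠ i`, and suppose every
involution `k` with `(ik)ᵐ = (ij)ⁿ` for some nonzero `m, n` is `A`-conjugate to `j`.
Then for every `n > 0` there is a unique involution `k` with `(ik)ⁿ = ij`. -/
theorem exists_unique_root_involution {G : Type*} [Group G]
    (i : G) (hi : IsInvolution i)
    (hdih : ∀ a b : G, IsInvolution a → IsInvolution b → a ≠ b → GenInfiniteDihedral a b)
    (hcent : ∀ g : G, ∀ a b : G, IsInvolution a → IsInvolution b → a ≠ b →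
      g * a = a * g → g * b = b * g → g = 1)
    (j : G) (hj : IsInvolution j) (hji : j ≠ i)
    (horb : ∀ k : G, IsInvolution k →
      (∃ m n : ℤ, m ≠ 0 ∧ n ≠ 0 ∧ (i * k) ^ m = (i * j) ^ n) →
      ∃ a ∈ Subgroup.centralizer {i}, a * j * a⁻¹ = k) :
    ∀ n : ℕ, 0 < n → ∃! k : G, IsInvolution k ∧ (i * k) ^ n = i * j := by
  intro n hn
  obtain ⟨hi2, hi1⟩ := hi
  obtain ⟨hj2, hj1⟩ := hj
  have hii : i * i = 1 := by rw [← sq]; exact hi2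
  have hjj : j * j = 1 := by rw [← sq]; exact hj2
  have hiinv : i⁻¹ = i := inv_eq_of_mul_eq_one_left hii
  have hjinv : j⁻¹ = j := inv_eq_of_mul_eq_one_left hjj
  have hiL : ∀ x : G, i * (i * x) = x := fun x => by rw [← mul_assoc, hii, one_mul]
  -- conjugation by i inverts powers of i*j
  have hconj : ∀ m : ℕ, i * (i * j) ^ m * i = ((i * j) ^ m)⁻¹ := by
    intro m
    have h1 : i * (i * j) * i⁻¹ = (i * j)⁻¹ := by
      rw [mul_inv_rev, hiinv, hjinv, ← mul_assoc, hii, one_mul]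
    calc i * (i * j) ^ m * i = i * (i * j) ^ m * i⁻¹ := by rw [hiinv]
      _ = (i * (i * j) * i⁻¹) ^ m := (conj_pow).symm
      _ = ((i * j)⁻¹) ^ m := by rw [h1]
      _ = ((i * j) ^ m)⁻¹ := by rw [inv_pow]
  -- j' = i * (i*j)^n is an involution
  have hj'2 : (i * (i * j) ^ n) ^ 2 = 1 := by
    rw [sq, ← mul_assoc, hconj n, inv_mul_cancel]
  have hj'1 : i * (i * j) ^ n ≠ 1 := by
    intro h
    have hti : (i * j) ^ n = i := mul_left_cancel (h.trans hii.symm)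
    have hcomm : (i * j) * i = i * (i * j) := by
      have : (i * j) * (i * j) ^ n = (i * j) ^ n * (i * j) := by
        rw [← pow_succ, ← pow_succ']
      rwa [hti] at this
    have hjij : i * j * i = j := by
      rw [hcomm, ← mul_assoc, hii, one_mul]
    have hij2 : (i * j) ^ 2 = 1 := by
      rw [sq, ← mul_assoc, hjij, hjj]
    rcases Nat.even_or_odd n with ⟨m, hm⟩ | ⟨m, hm⟩
    · have h1 : (i * j) ^ n = 1 := by
        rw [hm, ← two_mul, pow_mul, hij2, one_pow]
      exact hi1 (hti.symm.trans h1)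
    · have h1 : (i * j) ^ n = i * j := by
        rw [hm, pow_succ, pow_mul, hij2, one_pow, one_mul]
      have h2 : i * j = i := h1.symm.trans hti
      exact hj1 (mul_left_cancel (h2.trans (mul_one i).symm))
  -- apply horb to j'
  obtain ⟨a, ha, haj⟩ := horb (i * (i * j) ^ n) ⟨hj'2, hj'1⟩ ⟨1, (n : ℤ), one_ne_zero,
    Int.natCast_ne_zero.mpr hn.ne', by
      rw [zpow_one, zpow_natCast, ← mul_assoc, hii, one_mul]⟩
  have hai : i * a = a * i := ha i rfl
  have hainv : i * a⁻¹ = a⁻¹ * i := by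
    have h := congrArg (fun x => a⁻¹ * x * a⁻¹) hai
    simp only [mul_assoc] at h
    simp only [inv_mul_cancel_left, mul_inv_cancel_left, mul_inv_cancel, mul_one] at h
    exact h.symm
  -- properties of the candidate k = a⁻¹ * j * a
  have hksq : (a⁻¹ * j * a) ^ 2 = 1 := by
    rw [sq]; simp [mul_assoc, ← mul_assoc j j, hjj]
  have hkne : a⁻¹ * j * a ≠ 1 := by
    intro h
    have hjk : a * (a⁻¹ * j * a) * a⁻¹ = j := by simp [mul_assoc]
    rw [h] at hjk
    exact hj1 (by simpa using hjk.symm)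
  have hkpow : (i * (a⁻¹ * j * a)) ^ n = i * j := by
    have hkey : i * (a⁻¹ * j * a) = a⁻¹ * (i * j) * a := by
      rw [← mul_assoc, ← mul_assoc, hainv, mul_assoc a⁻¹ i j]
    have h5 : (a⁻¹ * (i * j) * a) ^ n = a⁻¹ * (i * j) ^ n * a := by
      have := conj_pow (i := n) (a := a⁻¹) (b := i * j)
      simpa using this
    rw [hkey, h5]
    have h6 : a⁻¹ * (a * j * a⁻¹) * a = j := by simp [mul_assoc]
    rw [haj] at h6
    have h7 : i * (a⁻¹ * (i * j) ^ n * a) = j :=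
      calc i * (a⁻¹ * (i * j) ^ n * a) = a⁻¹ * (i * (i * j) ^ n) * a := by
            rw [← mul_assoc, ← mul_assoc, hainv, mul_assoc a⁻¹ i ((i * j) ^ n)]
        _ = j := h6
    exact mul_left_cancel (h7.trans (hiL j).symm)
  refine ⟨a⁻¹ * j * a, ⟨⟨hksq, hkne⟩, hkpow⟩, ?_⟩
  -- uniqueness
  rintro k' ⟨hk', hk'n⟩
  have key : ∀ k₁ k₂ : G, IsInvolution k₁ → IsInvolution k₂ →
      (i * k₁) ^ n = i * j → (i * k₂) ^ n = i * j → k₁ = k₂ := by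
    intro k₁ k₂ hk₁ hk₂ h₁ h₂
    have mk : ∀ k : G, IsInvolution k → (i * k) ^ n = i * j →
        ∃ c ∈ Subgroup.centralizer ({i} : Set G), c * j * c⁻¹ = k := by
      intro k hk hkn
      exact horb k hk ⟨(n : ℤ), 1, Int.natCast_ne_zero.mpr hn.ne', one_ne_zero, by
        rw [zpow_one, zpow_natCast, hkn]⟩
    obtain ⟨c₁, hc₁, hc₁j⟩ := mk k₁ hk₁ h₁
    obtain ⟨c₂, hc₂, hc₂j⟩ := mk k₂ hk₂ h₂
    obtain ⟨b, hb⟩ : ∃ b : G, b = c₂ * c₁⁻¹ := ⟨_, rfl⟩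
    have hbmem : b ∈ Subgroup.centralizer ({i} : Set G) := by
      rw [hb]; exact mul_mem hc₂ (inv_mem hc₁)
    have hbi : i * b = b * i := hbmem i rfl
    have hk₂b : k₂ = b * k₁ * b⁻¹ := by
      rw [hb, ← hc₂j, ← hc₁j]; group
    have hbij : b * (i * j) = (i * j) * b := by
      have e1 : (i * (b * k₁ * b⁻¹)) ^ n = b * (i * k₁) ^ n * b⁻¹ := by
        rw [show i * (b * k₁ * b⁻¹) = b * (i * k₁) * b⁻¹ by
          rw [← mul_assoc, ← mul_assoc, hbi, mul_assoc b i k₁], conj_pow]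
      rw [← hk₂b, h₁, h₂] at e1
      have := congrArg (fun x => x * b) e1
      simpa [mul_assoc] using this.symm
    have hbj : b * j = j * b := by
      have e2 : i * (b * j) = i * (j * b) := by
        rw [← mul_assoc, hbi, mul_assoc, hbij, mul_assoc]
      exact mul_left_cancel e2
    have hb1 : b = 1 := hcent b i j ⟨hi2, hi1⟩ ⟨hj2, hj1⟩ hji.symm hbi.symm hbj
    rw [hk₂b, hb1, one_mul, inv_one, mul_one]
  exact key k' (a⁻¹ * j * a) hk' ⟨hksq, hkne⟩ hk'n hkpow
end
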